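/- arXiv:1209.5870 — 4 statements merged into one kernel-verified Lean document; each statement's English description precedes it below -/
import Mathlib

section
/- In an orthonormal basis (θ₁,…,θ₄, θ₁*,…,θ₄*) of ℝ⁴ ⊕ (ℝ⁴)*, an 8×8 real matrix u squares to -Id, is orthogonal for the pseudo-metric ½[[0,I],[I,0]], and orthogonal for the metric (i.e. uᵀu = Id) if and only if u has block form [[P, Q],[Q, P]] with P, Q ∈ so(4), PQ + QP = 0, and P² + Q² = -Id. -/
open Matrix

/-- The pseudo-metric `½[[0,I],[I,0]]` on `ℝ⁴ ⊕ (ℝ⁴)*` in the basis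
`(θ₁,…,θ₄,θ₁*,…,θ₄*)`. -/
noncomputable def pseudoMetric : Matrix (Fin 4 ⊕ Fin 4) (Fin 4 ⊕ Fin 4) ℝ :=
  (1 / 2 : ℝ) • Matrix.fromBlocks 0 1 1 0

/-- In an orthonormal basis, `u` squares to `-Id`, is orthogonal for the pseudo-metric
and orthogonal for the metric iff `u = [[P,Q],[Q,P]]` with `P, Q ∈ so(4)`,
`PQ + QP = 0` and `P² + Q² = -Id`. -/
theorem stmt6 (u : Matrix (Fin 4 ⊕ Fin 4) (Fin 4 ⊕ Fin 4) ℝ) :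
    (u * u = -1 ∧ uᵀ * pseudoMetric * u = pseudoMetric ∧ uᵀ * u = 1) ↔
    ∃ P Q : Matrix (Fin 4) (Fin 4) ℝ, Pᵀ = -P ∧ Qᵀ = -Q ∧
      P * Q + Q * P = 0 ∧ P * P + Q * Q = -1 ∧
      u = Matrix.fromBlocks P Q Q P := by
  constructor
  · rintro ⟨h1, h2, h3⟩
    have h3' : u * uᵀ = 1 := mul_eq_one_comm.mp h3
    have hJ : uᵀ * (fromBlocks 0 1 1 0) * u = (fromBlocks 0 1 1 0 :
        Matrix (Fin 4 ⊕ Fin 4) (Fin 4 ⊕ Fin 4) ℝ) := by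
      have h := congrArg (fun M => (2 : ℝ) • M) h2
      simp only [pseudoMetric, Matrix.mul_smul, Matrix.smul_mul, smul_smul] at h
      norm_num at h
      exact h
    have hcomm : (fromBlocks 0 1 1 0 : Matrix (Fin 4 ⊕ Fin 4) (Fin 4 ⊕ Fin 4) ℝ) * u
        = u * fromBlocks 0 1 1 0 := by
      calc (fromBlocks 0 1 1 0 : Matrix (Fin 4 ⊕ Fin 4) (Fin 4 ⊕ Fin 4) ℝ) * u
          = (u * uᵀ) * (fromBlocks 0 1 1 0) * u := by rw [h3', one_mul]
        _ = u * (uᵀ * fromBlocks 0 1 1 0 * u) := by simp only [mul_assoc]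
        _ = u * fromBlocks 0 1 1 0 := by rw [hJ]
    have hskew : uᵀ = -u := by
      have hinv : u * (-u) = 1 := by rw [mul_neg, h1, neg_neg]
      calc uᵀ = uᵀ * (u * (-u)) := by rw [hinv, mul_one]
        _ = (uᵀ * u) * (-u) := by rw [mul_assoc]
        _ = -u := by rw [h3, one_mul]
    set A := u.toBlocks₁₁ with hA
    set B := u.toBlocks₁₂ with hB
    set C := u.toBlocks₂₁ with hC
    set D := u.toBlocks₂₂ with hD
    have hu : u = fromBlocks A B C D := (fromBlocks_toBlocks u).symm
    rw [hu] at hcomm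
    simp only [Matrix.fromBlocks_multiply, Matrix.zero_mul, Matrix.one_mul,
      Matrix.mul_zero, Matrix.mul_one, zero_add, add_zero] at hcomm
    have hCB : C = B := by
      have := congrArg Matrix.toBlocks₁₁ hcomm
      simpa [Matrix.toBlocks_fromBlocks₁₁] using this
    have hDA : D = A := by
      have := congrArg Matrix.toBlocks₁₂ hcomm
      simpa [Matrix.toBlocks_fromBlocks₁₂] using this
    rw [hCB, hDA] at hu
    refine ⟨A, B, ?_, ?_, ?_, ?_, hu⟩
    · rw [hu] at hskew
      simp only [Matrix.fromBlocks_transpose, Matrix.fromBlocks_neg] at hskew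
      have := congrArg Matrix.toBlocks₁₁ hskew
      simpa [Matrix.toBlocks_fromBlocks₁₁] using this
    · rw [hu] at hskew
      simp only [Matrix.fromBlocks_transpose, Matrix.fromBlocks_neg] at hskew
      have := congrArg Matrix.toBlocks₁₂ hskew
      simpa [Matrix.toBlocks_fromBlocks₁₂] using this
    · rw [hu] at h1
      have hone : (-1 : Matrix (Fin 4 ⊕ Fin 4) (Fin 4 ⊕ Fin 4) ℝ)
          = fromBlocks (-1) 0 0 (-1) := by
        rw [← Matrix.fromBlocks_one, Matrix.fromBlocks_neg, neg_zero]
      rw [Matrix.fromBlocks_multiply, hone] at h1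
      have := congrArg Matrix.toBlocks₁₂ h1
      simpa [Matrix.toBlocks_fromBlocks₁₂] using this
    · rw [hu] at h1
      have hone : (-1 : Matrix (Fin 4 ⊕ Fin 4) (Fin 4 ⊕ Fin 4) ℝ)
          = fromBlocks (-1) 0 0 (-1) := by
        rw [← Matrix.fromBlocks_one, Matrix.fromBlocks_neg, neg_zero]
      rw [Matrix.fromBlocks_multiply, hone] at h1
      have := congrArg Matrix.toBlocks₁₁ h1
      simpa [Matrix.toBlocks_fromBlocks₁₁] using this
  · rintro ⟨P, Q, hP, hQ, hPQ, hsq, rfl⟩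
    have hone : (-1 : Matrix (Fin 4 ⊕ Fin 4) (Fin 4 ⊕ Fin 4) ℝ)
        = fromBlocks (-1) 0 0 (-1) := by
      rw [← Matrix.fromBlocks_one, Matrix.fromBlocks_neg, neg_zero]
    have h1 : fromBlocks P Q Q P * fromBlocks P Q Q P
        = (-1 : Matrix (Fin 4 ⊕ Fin 4) (Fin 4 ⊕ Fin 4) ℝ) := by
      rw [Matrix.fromBlocks_multiply, hone, hsq, hPQ, add_comm (Q * P) (P * Q), hPQ,
        add_comm (Q * Q) (P * P), hsq]
    have hskew : (fromBlocks P Q Q P)ᵀ = -(fromBlocks P Q Q P) := by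
      rw [Matrix.fromBlocks_transpose, Matrix.fromBlocks_neg, hP, hQ]
    have h3 : (fromBlocks P Q Q P)ᵀ * fromBlocks P Q Q P = 1 := by
      rw [hskew, neg_mul, h1, neg_neg]
    refine ⟨h1, ?_, h3⟩
    have hcomm : (fromBlocks 0 1 1 0 : Matrix (Fin 4 ⊕ Fin 4) (Fin 4 ⊕ Fin 4) ℝ)
        * fromBlocks P Q Q P = fromBlocks P Q Q P * fromBlocks 0 1 1 0 := by
      simp [Matrix.fromBlocks_multiply]
    rw [pseudoMetric, Matrix.mul_smul, Matrix.smul_mul, mul_assoc, hcomm,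
      ← mul_assoc, h3, one_mul]
end

section
/- In the basis (θ₁+θ₁*, …, θ₄+θ₄*, θ₁-θ₁*, …, θ₄-θ₄*) of ℝ⁴ ⊕ (ℝ⁴)*, an endomorphism u is a generalized almost complex structure compatible with the standard metric (u² = -Id, skew-adjoint for the pseudo-metric, uᵀu = Id for the metric) if and only if u has block-diagonal form [[u₁, 0],[0, u₂]] where u₁, u₂ ∈ O(4) and u₁² = u₂² = -Id. -/
open Matrix

/-- The pseudo-metric, which in the basis `(θᵢ+θᵢ*, θᵢ-θᵢ*)` of `ℝ⁴ ⊕ (ℝ⁴)*`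
has matrix `[[I,0],[0,-I]]`. -/
def pseudoMetric' : Matrix (Fin 4 ⊕ Fin 4) (Fin 4 ⊕ Fin 4) ℝ :=
  Matrix.fromBlocks 1 0 0 (-1)

/-- In the basis `(θᵢ+θᵢ*, θᵢ-θᵢ*)`, `u` is a generalized almost complex structure
compatible with the metric (here the metric is `2·Id`, so compatibility reads
`uᵀu = Id`) iff `u = [[u₁,0],[0,u₂]]` with `u₁, u₂ ∈ O(4)` and `u₁² = u₂² = -Id`. -/
theorem stmt7 (u : Matrix (Fin 4 ⊕ Fin 4) (Fin 4 ⊕ Fin 4) ℝ) :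
    (u * u = -1 ∧ uᵀ * pseudoMetric' + pseudoMetric' * u = 0 ∧
      uᵀ * ((2 : ℝ) • (1 : Matrix (Fin 4 ⊕ Fin 4) (Fin 4 ⊕ Fin 4) ℝ)) * u
        = (2 : ℝ) • (1 : Matrix (Fin 4 ⊕ Fin 4) (Fin 4 ⊕ Fin 4) ℝ)) ↔
    ∃ u₁ u₂ : Matrix (Fin 4) (Fin 4) ℝ, u₁ᵀ * u₁ = 1 ∧ u₂ᵀ * u₂ = 1 ∧
      u₁ * u₁ = -1 ∧ u₂ * u₂ = -1 ∧ u = Matrix.fromBlocks u₁ 0 0 u₂ := by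
  have hneg1 : (-1 : Matrix (Fin 4 ⊕ Fin 4) (Fin 4 ⊕ Fin 4) ℝ)
      = Matrix.fromBlocks (-1) 0 0 (-1) := by
    rw [← Matrix.fromBlocks_one]
    ext (i | i) (j | j) <;> simp [Matrix.fromBlocks]
  constructor
  · rintro ⟨h1, h2, h3⟩
    -- cancel the factor 2
    have h3' : uᵀ * u = 1 := by
      have h : (2 : ℝ) • (uᵀ * u) = (2 : ℝ) • (1 : Matrix (Fin 4 ⊕ Fin 4) (Fin 4 ⊕ Fin 4) ℝ) := by
        calc (2:ℝ) • (uᵀ * u)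
            = uᵀ * ((2 : ℝ) • (1 : Matrix (Fin 4 ⊕ Fin 4) (Fin 4 ⊕ Fin 4) ℝ)) * u := by
              rw [Matrix.mul_smul, mul_one, Matrix.smul_mul]
          _ = _ := h3
      exact smul_right_injective _ (two_ne_zero) h
    -- u is antisymmetric
    have hT : uᵀ = -u := by
      have h : uᵀ * (u * u) = uᵀ * (-1) := by rw [h1]
      rw [← mul_assoc, h3', one_mul, mul_neg_one] at h
      exact (neg_eq_iff_eq_neg.mpr h).symm
    -- u commutes with the pseudo metric
    have hcomm : pseudoMetric' * u = u * pseudoMetric' := by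
      have h := h2
      rw [hT, Matrix.neg_mul, neg_add_eq_zero] at h
      exact h.symm
    have hu := (Matrix.fromBlocks_toBlocks u).symm
    set A := u.toBlocks₁₁
    set B := u.toBlocks₁₂
    set C := u.toBlocks₂₁
    set D := u.toBlocks₂₂
    rw [hu, pseudoMetric', Matrix.fromBlocks_multiply, Matrix.fromBlocks_multiply] at hcomm
    have hB : B = 0 := by
      have h := congrArg Matrix.toBlocks₁₂ hcomm
      simp at h
      ext i j
      have h' := congrFun (congrFun h i) j
      simp only [Matrix.neg_apply] at h'
      simp only [Matrix.zero_apply]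
      linarith
    have hC : C = 0 := by
      have h := congrArg Matrix.toBlocks₂₁ hcomm
      simp at h
      ext i j
      have h' := congrFun (congrFun h i) j
      simp only [Matrix.neg_apply] at h'
      simp only [Matrix.zero_apply]
      linarith
    rw [hB, hC] at hu
    rw [hu, Matrix.fromBlocks_transpose, Matrix.fromBlocks_multiply] at h3'
    rw [← Matrix.fromBlocks_one] at h3'
    rw [hu, Matrix.fromBlocks_multiply, hneg1] at h1
    refine ⟨A, D, ?_, ?_, ?_, ?_, hu⟩
    · have h := congrArg Matrix.toBlocks₁₁ h3'
      simpa [-Matrix.fromBlocks_one] using h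
    · have h := congrArg Matrix.toBlocks₂₂ h3'
      simpa [-Matrix.fromBlocks_one] using h
    · have h := congrArg Matrix.toBlocks₁₁ h1; simpa using h
    · have h := congrArg Matrix.toBlocks₂₂ h1; simpa using h
  · rintro ⟨u₁, u₂, ho1, ho2, hs1, hs2, rfl⟩
    have hT1 : u₁ᵀ = -u₁ := by
      have h : u₁ᵀ * (u₁ * u₁) = u₁ᵀ * (-1) := by rw [hs1]
      rw [← mul_assoc, ho1, one_mul, mul_neg_one] at h
      exact (neg_eq_iff_eq_neg.mpr h).symm
    have hT2 : u₂ᵀ = -u₂ := by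
      have h : u₂ᵀ * (u₂ * u₂) = u₂ᵀ * (-1) := by rw [hs2]
      rw [← mul_assoc, ho2, one_mul, mul_neg_one] at h
      exact (neg_eq_iff_eq_neg.mpr h).symm
    refine ⟨?_, ?_, ?_⟩
    · rw [Matrix.fromBlocks_multiply, hneg1]
      simp [hs1, hs2]
    · rw [pseudoMetric', Matrix.fromBlocks_transpose, Matrix.fromBlocks_multiply,
        Matrix.fromBlocks_multiply, hT1, hT2]
      ext (i | i) (j | j) <;> simp [Matrix.fromBlocks]
    · rw [Matrix.mul_smul, mul_one, Matrix.smul_mul, Matrix.fromBlocks_transpose,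
        Matrix.fromBlocks_multiply]
      congr 1
      rw [← Matrix.fromBlocks_one]
      simp [ho1, ho2]
end

section
/- The map sending a block matrix [[u₁, 0],[0, u₂]] (with u₁, u₂ ∈ O(4), u₁² = u₂² = -Id) to the pair (𝒥₁, 𝒥₂) with 𝒥₁ = [[P, Q],[Q, P]], 𝒥₂ = [[Q, P],[P, Q]], where P = (u₁+u₂)/2 and Q = (u₁-u₂)/2, yields matrices satisfying 𝒥₁² = 𝒥₂² = -Id, 𝒥₁𝒥₂ = 𝒥₂𝒥₁, and 𝒥₁𝒥₂ = -[[0, I],[I, 0]]. -/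
open Matrix

/-- Given `u₁, u₂ ∈ O(4)` with `u₁² = u₂² = -Id`, setting `P = (u₁+u₂)/2`,
`Q = (u₁-u₂)/2`, the matrices `𝒥₁ = [[P,Q],[Q,P]]` and `𝒥₂ = [[Q,P],[P,Q]]`
satisfy `𝒥₁² = 𝒥₂² = -Id`, `𝒥₁𝒥₂ = 𝒥₂𝒥₁ = -G` with `G = [[0,I],[I,0]]`. -/
theorem stmt8 (u₁ u₂ : Matrix (Fin 4) (Fin 4) ℝ)
    (h₁ : u₁ᵀ * u₁ = 1) (h₂ : u₂ᵀ * u₂ = 1)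
    (h₁' : u₁ * u₁ = -1) (h₂' : u₂ * u₂ = -1)
    (P Q : Matrix (Fin 4) (Fin 4) ℝ)
    (hP : P = (1 / 2 : ℝ) • (u₁ + u₂)) (hQ : Q = (1 / 2 : ℝ) • (u₁ - u₂))
    (J₁ J₂ : Matrix (Fin 4 ⊕ Fin 4) (Fin 4 ⊕ Fin 4) ℝ)
    (hJ₁ : J₁ = Matrix.fromBlocks P Q Q P) (hJ₂ : J₂ = Matrix.fromBlocks Q P P Q) :
    J₁ * J₁ = -1 ∧ J₂ * J₂ = -1 ∧ J₁ * J₂ = J₂ * J₁ ∧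
      J₁ * J₂ = -Matrix.fromBlocks 0 1 1 0 := by
  have key1 : P * P + Q * Q = -1 := by
    subst hP hQ
    rw [smul_mul_smul_comm, smul_mul_smul_comm, ← smul_add]
    have : (u₁ + u₂) * (u₁ + u₂) + (u₁ - u₂) * (u₁ - u₂)
        = u₁ * u₁ + u₁ * u₁ + (u₂ * u₂ + u₂ * u₂) := by noncomm_ring
    rw [this, h₁', h₂']
    module
  have key2 : P * Q + Q * P = 0 := by
    subst hP hQ
    rw [smul_mul_smul_comm, smul_mul_smul_comm, ← smul_add]
    have : (u₁ + u₂) * (u₁ - u₂) + (u₁ - u₂) * (u₁ + u₂)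
        = u₁ * u₁ + u₁ * u₁ - (u₂ * u₂ + u₂ * u₂) := by noncomm_ring
    rw [this, h₁', h₂']
    module
  have key2' : Q * P + P * Q = 0 := by rw [add_comm]; exact key2
  have key1' : Q * Q + P * P = -1 := by rw [add_comm]; exact key1
  subst hJ₁ hJ₂
  rw [fromBlocks_multiply, fromBlocks_multiply, fromBlocks_multiply, fromBlocks_multiply,
    key1, key1', key2, key2']
  refine ⟨?_, ?_, rfl, ?_⟩
  · rw [← fromBlocks_one, Matrix.fromBlocks_neg]; norm_num
  · rw [← fromBlocks_one, Matrix.fromBlocks_neg]; norm_num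
  · rw [Matrix.fromBlocks_neg]; norm_num
end

section
/- The group O_g(4,4) of 8×8 real matrices orthogonal for both the pseudo-metric ½[[0,I],[I,0]] and the Euclidean metric acts transitively by conjugation on the set Z(4) = {u ∈ O_g(4,4) : u² = -Id}. -/
open Matrix

/-- Membership in `O_g(4,4)`: orthogonal for the pseudo-metric and for the
Euclidean metric. -/
def memOg (P : Matrix (Fin 4 ⊕ Fin 4) (Fin 4 ⊕ Fin 4) ℝ) : Prop :=
  Pᵀ * pseudoMetric * P = pseudoMetric ∧ Pᵀ * P = 1


/-- standard complex structure on ℝ⁴ -/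
def J4 : Matrix (Fin 4) (Fin 4) ℝ := !![0,-1,0,0;1,0,0,0;0,0,0,-1;0,0,1,0]

lemma mv_dot (A : Matrix (Fin 4) (Fin 4) ℝ) (v w : Fin 4 → ℝ) :
    (A *ᵥ v) ⬝ᵥ w = v ⬝ᵥ (Aᵀ *ᵥ w) := by
  rw [dotProduct_mulVec, vecMul_transpose]

lemma dot_self_nonneg (v : Fin 4 → ℝ) : 0 ≤ v ⬝ᵥ v :=
  Finset.sum_nonneg fun i _ => mul_self_nonneg _

/-- core: every orthogonal complex structure on ℝ⁴ is O(4)-conjugate to J4 -/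
lemma core (a : Matrix (Fin 4) (Fin 4) ℝ) (h1 : aᵀ * a = 1) (h2 : a * a = -1) :
    ∃ Q : Matrix (Fin 4) (Fin 4) ℝ, Qᵀ * Q = 1 ∧ a * Q = Q * J4 := by
  have hskew : aᵀ = -a := by
    have : a * (-a) = 1 := by rw [mul_neg, h2, neg_neg]
    calc aᵀ = aᵀ * (a * (-a)) := by rw [this, mul_one]
    _ = (aᵀ * a) * (-a) := by rw [mul_assoc]
    _ = -a := by rw [h1, one_mul]
  -- orthogonality fact
  have horth : ∀ x y : Fin 4 → ℝ, (a *ᵥ x) ⬝ᵥ (a *ᵥ y) = x ⬝ᵥ y := by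
    intro x y
    rw [mv_dot, mulVec_mulVec, h1, one_mulVec]
  have hsk : ∀ x y : Fin 4 → ℝ, (a *ᵥ x) ⬝ᵥ y = -(x ⬝ᵥ (a *ᵥ y)) := by
    intro x y
    rw [mv_dot, hskew, neg_mulVec, dotProduct_neg]
  have hself : ∀ x : Fin 4 → ℝ, x ⬝ᵥ (a *ᵥ x) = 0 := by
    intro x
    have := hsk x x
    rw [dotProduct_comm (a *ᵥ x) x] at this
    linarith
  -- the first vector
  set e1 : Fin 4 → ℝ := ![1,0,0,0] with he1
  have he1e1 : e1 ⬝ᵥ e1 = 1 := by simp [he1, dotProduct, Fin.sum_univ_four]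
  -- find e3 orthogonal to e1 and a e1
  obtain ⟨x, hx0, hxe1, hxae1⟩ : ∃ x : Fin 4 → ℝ, x ≠ 0 ∧ e1 ⬝ᵥ x = 0 ∧ (a *ᵥ e1) ⬝ᵥ x = 0 := by
    set M : Matrix (Fin 2) (Fin 4) ℝ := Matrix.of ![e1, a *ᵥ e1] with hM
    have hni : ¬ Function.Injective M.mulVecLin := by
      intro hinj
      have := LinearMap.finrank_le_finrank_of_injective hinj
      simp at this
    rw [← LinearMap.ker_eq_bot] at hni
    obtain ⟨x, hxk, hx0⟩ := Submodule.exists_mem_ne_zero_of_ne_bot hni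
    refine ⟨x, hx0, ?_, ?_⟩
    · have := congrFun (LinearMap.mem_ker.mp hxk) 0
      simpa [hM, mulVec, dotProduct] using this
    · have := congrFun (LinearMap.mem_ker.mp hxk) 1
      simpa [hM, mulVec, dotProduct] using this
  have hxx : 0 < x ⬝ᵥ x := by
    rcases lt_or_eq_of_le (dot_self_nonneg x) with h | h
    · exact h
    · exact absurd (dotProduct_self_eq_zero.mp h.symm) hx0
  set e3 : Fin 4 → ℝ := (Real.sqrt (x ⬝ᵥ x))⁻¹ • x with he3
  have he3e3 : e3 ⬝ᵥ e3 = 1 := by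
    rw [he3, smul_dotProduct, dotProduct_smul, smul_eq_mul, smul_eq_mul, ← mul_assoc,
      ← mul_inv, Real.mul_self_sqrt hxx.le]
    exact inv_mul_cancel₀ hxx.ne'
  have he1e3 : e1 ⬝ᵥ e3 = 0 := by rw [he3, dotProduct_smul, hxe1, smul_zero]
  have hae1e3 : (a *ᵥ e1) ⬝ᵥ e3 = 0 := by rw [he3, dotProduct_smul, hxae1, smul_zero]
  -- columns
  have he1ae3 : e1 ⬝ᵥ (a *ᵥ e3) = 0 := by
    have h := hsk e1 e3
    rw [hae1e3] at h
    linarith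
  set c : Fin 4 → Fin 4 → ℝ := ![e1, a *ᵥ e1, e3, a *ᵥ e3] with hc
  set Q : Matrix (Fin 4) (Fin 4) ℝ := Matrix.of (fun i j => c j i) with hQdef
  have hQcol : ∀ i j, Q i j = c j i := fun i j => rfl
  refine ⟨Q, ?_, ?_⟩
  · have entry : ∀ i j, (Qᵀ * Q) i j = c i ⬝ᵥ c j := by
      intro i j
      simp [Matrix.mul_apply, dotProduct, hQcol, mul_comm]
    ext i j
    rw [entry]
    fin_cases i <;> fin_cases j <;>
      simp [hc, one_apply, he1e1, he1ae3, he3e3, he1e3, hae1e3, hself, horth, hsk,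
        dotProduct_comm e3 e1, dotProduct_comm e3 (a *ᵥ e1),
        dotProduct_comm (a *ᵥ e1) e1, dotProduct_comm (a *ᵥ e3) e1,
        dotProduct_comm (a *ᵥ e3) (a *ᵥ e1), dotProduct_comm (a *ᵥ e3) e3]
  · have hL : ∀ i j, (a * Q) i j = (a *ᵥ c j) i := by
      intro i j
      simp [Matrix.mul_apply, mulVec, dotProduct, hQcol]
    ext i j
    rw [hL, Matrix.mul_apply]
    fin_cases j <;>
      simp [hQcol, hc, J4, Fin.sum_univ_four, mulVec_mulVec, h2, neg_mulVec, one_mulVec,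
        Matrix.vecHead, Matrix.vecTail]

namespace Stmt10Aux

abbrev Mat8 := Matrix (Fin 4 ⊕ Fin 4) (Fin 4 ⊕ Fin 4) ℝ
abbrev Mat4 := Matrix (Fin 4) (Fin 4) ℝ

noncomputable def Jm : Mat8 := Matrix.fromBlocks 0 1 1 0

lemma pm_eq : pseudoMetric = (1/2 : ℝ) • Jm := rfl

lemma memOg_iff (P : Mat8) : memOg P ↔ Pᵀ * P = 1 ∧ P * Jm = Jm * P := by
  constructor
  · rintro ⟨h1, h2⟩
    refine ⟨h2, ?_⟩
    rw [pm_eq, Matrix.mul_smul, Matrix.smul_mul] at h1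
    have hJ : Pᵀ * Jm * P = Jm :=
      smul_right_injective Mat8 (by norm_num : (1/2:ℝ) ≠ 0) h1
    have hPPt : P * Pᵀ = 1 := mul_eq_one_comm.mp h2
    calc P * Jm = P * (Pᵀ * Jm * P) := by rw [hJ]
      _ = (P * Pᵀ) * Jm * P := by noncomm_ring
      _ = Jm * P := by rw [hPPt, Matrix.one_mul]
  · rintro ⟨h2, hJ⟩
    refine ⟨?_, h2⟩
    rw [pm_eq, Matrix.mul_smul, Matrix.smul_mul]
    congr 1
    calc Pᵀ * Jm * P = Pᵀ * (Jm * P) := by rw [Matrix.mul_assoc]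
      _ = Pᵀ * (P * Jm) := by rw [hJ]
      _ = Jm := by rw [← Matrix.mul_assoc, h2, Matrix.one_mul]

noncomputable def Cm : Mat8 := (Real.sqrt 2)⁻¹ • Matrix.fromBlocks 1 1 1 (-1)

noncomputable def Km : Mat8 := Matrix.fromBlocks 1 0 0 (-1)

lemma half_smul : ((2:ℝ)⁻¹) • ((1 : Mat4) + 1) = 1 := by
  rw [← two_smul ℝ (1 : Mat4), smul_smul]
  norm_num

lemma hcc : (Real.sqrt 2)⁻¹ * (Real.sqrt 2)⁻¹ = (2:ℝ)⁻¹ := by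
  rw [← mul_inv, Real.mul_self_sqrt (by norm_num)]

lemma Cm_transpose : Cmᵀ = Cm := by
  rw [Cm, Matrix.transpose_smul, Matrix.fromBlocks_transpose]
  simp

lemma Cm_mul_Cm : Cm * Cm = 1 := by
  rw [Cm]
  simp only [Matrix.smul_mul, Matrix.mul_smul, smul_smul]
  rw [hcc, Matrix.fromBlocks_multiply]
  simp only [Matrix.mul_one, Matrix.one_mul, Matrix.mul_neg, Matrix.neg_mul,
    neg_neg, mul_one, one_mul, add_neg_cancel, neg_add_cancel]
  rw [Matrix.fromBlocks_smul]
  simp only [smul_zero]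
  rw [half_smul, Matrix.fromBlocks_one]

lemma Cm_J_Cm : Cm * Jm * Cm = Km := by
  rw [Cm, Jm, Km]
  simp only [Matrix.smul_mul, Matrix.mul_smul, smul_smul]
  rw [hcc, Matrix.fromBlocks_multiply, Matrix.fromBlocks_multiply]
  simp only [Matrix.mul_one, Matrix.one_mul, Matrix.mul_zero, Matrix.zero_mul,
    Matrix.mul_neg, Matrix.neg_mul, neg_neg, add_zero, zero_add,
    mul_one, one_mul, add_neg_cancel, neg_add_cancel]
  rw [Matrix.fromBlocks_smul]
  simp only [smul_zero, ← neg_add, smul_neg]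
  rw [half_smul]

noncomputable def U0 : Mat8 := Cm * Matrix.fromBlocks J4 0 0 J4 * Cm

lemma J_eq : Jm = Cm * Km * Cm := by
  rw [← Cm_J_Cm]
  calc Jm = (Cm * Cm) * Jm * (Cm * Cm) := by
        rw [Cm_mul_Cm, Matrix.one_mul, Matrix.mul_one]
    _ = Cm * (Cm * Jm * Cm) * Cm := by noncomm_ring

lemma normalForm (u : Mat8) (hu : memOg u) (hu2 : u * u = -1) :
    ∃ P : Mat8, memOg P ∧ u * P = P * U0 := by
  obtain ⟨huo, huJ⟩ := (memOg_iff u).mp hu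
  set w : Mat8 := Cm * u * Cm with hwdef
  have hw2 : w * w = -1 := by
    rw [hwdef]
    calc (Cm * u * Cm) * (Cm * u * Cm) = Cm * u * (Cm * Cm) * u * Cm := by
          noncomm_ring
      _ = Cm * (u * u) * Cm := by rw [Cm_mul_Cm]; noncomm_ring
      _ = -(Cm * Cm) := by rw [hu2]; noncomm_ring
      _ = -1 := by rw [Cm_mul_Cm]
  have hwo : wᵀ * w = 1 := by
    rw [hwdef]
    simp only [Matrix.transpose_mul, Cm_transpose]
    calc Cm * (uᵀ * Cm) * (Cm * u * Cm) = Cm * uᵀ * (Cm * Cm) * u * Cm := by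
          noncomm_ring
      _ = Cm * (uᵀ * u) * Cm := by rw [Cm_mul_Cm]; noncomm_ring
      _ = Cm * Cm := by rw [huo]; noncomm_ring
      _ = 1 := Cm_mul_Cm
  have hwK : w * Km = Km * w := by
    rw [hwdef, ← Cm_J_Cm]
    calc (Cm * u * Cm) * (Cm * Jm * Cm) = Cm * u * (Cm * Cm) * Jm * Cm := by
          noncomm_ring
      _ = Cm * (u * Jm) * Cm := by rw [Cm_mul_Cm]; noncomm_ring
      _ = Cm * (Jm * u) * Cm := by rw [huJ]
      _ = Cm * Jm * (Cm * Cm) * u * Cm := by rw [Cm_mul_Cm]; noncomm_ring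
      _ = (Cm * Jm * Cm) * (Cm * u * Cm) := by noncomm_ring
  clear huo huJ hu hu2
  obtain ⟨A, B, C2, D, hw⟩ : ∃ A B C2 D, w = Matrix.fromBlocks A B C2 D :=
    ⟨_, _, _, _, (Matrix.fromBlocks_toBlocks w).symm⟩
  rw [hw] at hwK hw2 hwo
  rw [Km] at hwK
  rw [show (-1 : Mat8) = Matrix.fromBlocks (-1) 0 0 (-1) by
    rw [← Matrix.fromBlocks_one, Matrix.fromBlocks_neg]; simp] at hw2
  rw [← Matrix.fromBlocks_one] at hwo
  rw [Matrix.fromBlocks_multiply, Matrix.fromBlocks_multiply] at hwK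
  rw [Matrix.fromBlocks_multiply] at hw2
  rw [Matrix.fromBlocks_transpose, Matrix.fromBlocks_multiply] at hwo
  rw [Matrix.fromBlocks_inj] at hwK hw2 hwo
  obtain ⟨-, hB, hC2, -⟩ := hwK
  have hB0 : B = 0 := by
    simp only [Matrix.mul_zero, Matrix.zero_mul, Matrix.mul_neg,
      Matrix.mul_one, Matrix.one_mul, add_zero, zero_add] at hB
    have h2 : (2:ℝ) • B = 0 := by
      rw [two_smul]
      linear_combination (norm := noncomm_ring) -hB
    simpa using (smul_eq_zero.mp h2).resolve_left (by norm_num)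
  have hC20 : C2 = 0 := by
    simp only [Matrix.mul_zero, Matrix.zero_mul, Matrix.mul_neg,
      Matrix.mul_one, Matrix.one_mul, add_zero, zero_add] at hC2
    have h2 : (2:ℝ) • C2 = 0 := by
      rw [two_smul]
      linear_combination (norm := noncomm_ring) hC2
    simpa using (smul_eq_zero.mp h2).resolve_left (by norm_num)
  subst hB0 hC20
  simp only [Matrix.mul_zero, Matrix.zero_mul, Matrix.transpose_zero,
    add_zero, zero_add] at hw2 hwo
  obtain ⟨hA2, -, -, hD2⟩ := hw2
  obtain ⟨hAo, -, -, hDo⟩ := hwo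
  obtain ⟨QA, hQAo, hQAc⟩ := core A hAo hA2
  obtain ⟨QD, hQDo, hQDc⟩ := core D hDo hD2
  set R : Mat8 := Matrix.fromBlocks QA 0 0 QD with hRdef
  have hRo : Rᵀ * R = 1 := by
    rw [hRdef, Matrix.fromBlocks_transpose, Matrix.fromBlocks_multiply]
    simp [hQAo, hQDo, ← Matrix.fromBlocks_one]
  have hRK : R * Km = Km * R := by
    rw [hRdef, Km, Matrix.fromBlocks_multiply, Matrix.fromBlocks_multiply]
    simp
  have hwR : w * R = R * Matrix.fromBlocks J4 0 0 J4 := by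
    rw [hw, hRdef, Matrix.fromBlocks_multiply, Matrix.fromBlocks_multiply]
    simp [hQAc, hQDc]
  have hu' : u = Cm * w * Cm := by
    rw [hwdef]
    calc u = (Cm * Cm) * u * (Cm * Cm) := by
          rw [Cm_mul_Cm, Matrix.one_mul, Matrix.mul_one]
      _ = Cm * (Cm * u * Cm) * Cm := by noncomm_ring
  refine ⟨Cm * R * Cm, ?_, ?_⟩
  · rw [memOg_iff]
    constructor
    · simp only [Matrix.transpose_mul, Cm_transpose]
      calc Cm * (Rᵀ * Cm) * (Cm * R * Cm) = Cm * Rᵀ * (Cm * Cm) * R * Cm := by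
            noncomm_ring
        _ = Cm * (Rᵀ * R) * Cm := by rw [Cm_mul_Cm]; noncomm_ring
        _ = Cm * Cm := by rw [hRo]; noncomm_ring
        _ = 1 := Cm_mul_Cm
    · rw [J_eq]
      calc (Cm * R * Cm) * (Cm * Km * Cm) = Cm * R * (Cm * Cm) * Km * Cm := by
            noncomm_ring
        _ = Cm * (R * Km) * Cm := by rw [Cm_mul_Cm]; noncomm_ring
        _ = Cm * (Km * R) * Cm := by rw [hRK]
        _ = Cm * Km * (Cm * Cm) * R * Cm := by rw [Cm_mul_Cm]; noncomm_ring
        _ = (Cm * Km * Cm) * (Cm * R * Cm) := by noncomm_ring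
  · rw [hu', U0]
    calc (Cm * w * Cm) * (Cm * R * Cm) = Cm * w * (Cm * Cm) * R * Cm := by
          noncomm_ring
      _ = Cm * (w * R) * Cm := by rw [Cm_mul_Cm]; noncomm_ring
      _ = Cm * (R * Matrix.fromBlocks J4 0 0 J4) * Cm := by rw [hwR]
      _ = Cm * R * (Cm * Cm) * Matrix.fromBlocks J4 0 0 J4 * Cm := by
            rw [Cm_mul_Cm]; noncomm_ring
      _ = (Cm * R * Cm) * (Cm * Matrix.fromBlocks J4 0 0 J4 * Cm) := by
            noncomm_ring

end Stmt10Aux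

open Stmt10Aux in
/-- `O_g(4,4)` acts transitively by conjugation on
`Z(4) = {u ∈ O_g(4,4) : u² = -Id}`. -/
theorem stmt10 (u v : Matrix (Fin 4 ⊕ Fin 4) (Fin 4 ⊕ Fin 4) ℝ)
    (hu : memOg u ∧ u * u = -1) (hv : memOg v ∧ v * v = -1) :
    ∃ P : Matrix (Fin 4 ⊕ Fin 4) (Fin 4 ⊕ Fin 4) ℝ,
      memOg P ∧ v = P * u * P⁻¹ := by
  obtain ⟨Pu, hPu, hPuc⟩ := normalForm u hu.1 hu.2
  obtain ⟨Pv, hPv, hPvc⟩ := normalForm v hv.1 hv.2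
  obtain ⟨hPuo, hPuJ⟩ := (memOg_iff Pu).mp hPu
  obtain ⟨hPvo, hPvJ⟩ := (memOg_iff Pv).mp hPv
  set P : Mat8 := Pv * Puᵀ with hPdef
  have hPo : Pᵀ * P = 1 := by
    rw [hPdef, Matrix.transpose_mul, Matrix.transpose_transpose]
    calc Pu * Pvᵀ * (Pv * Puᵀ) = Pu * (Pvᵀ * Pv) * Puᵀ := by noncomm_ring
      _ = Pu * Puᵀ := by rw [hPvo]; noncomm_ring
      _ = 1 := mul_eq_one_comm.mp hPuo
  have hPPt : P * Pᵀ = 1 := mul_eq_one_comm.mp hPo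
  have hPuPut : Pu * Puᵀ = 1 := mul_eq_one_comm.mp hPuo
  have hPut_u : Puᵀ * u = U0 * Puᵀ := by
    calc Puᵀ * u = Puᵀ * u * (Pu * Puᵀ) := by rw [hPuPut, Matrix.mul_one]
      _ = Puᵀ * (u * Pu) * Puᵀ := by noncomm_ring
      _ = Puᵀ * (Pu * U0) * Puᵀ := by rw [hPuc]
      _ = (Puᵀ * Pu) * U0 * Puᵀ := by noncomm_ring
      _ = U0 * Puᵀ := by rw [hPuo, Matrix.one_mul]
  have hcomm : v * P = P * u := by
    calc v * P = (v * Pv) * Puᵀ := by rw [hPdef]; noncomm_ring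
      _ = Pv * U0 * Puᵀ := by rw [hPvc]
      _ = Pv * (U0 * Puᵀ) := by rw [Matrix.mul_assoc]
      _ = Pv * (Puᵀ * u) := by rw [hPut_u]
      _ = P * u := by rw [hPdef, Matrix.mul_assoc]
  have hmemP : memOg P := by
    rw [memOg_iff]
    refine ⟨hPo, ?_⟩
    have hPuJt : Puᵀ * Jm = Jm * Puᵀ := by
      have h := congrArg Matrix.transpose hPuJ
      rw [Matrix.transpose_mul, Matrix.transpose_mul] at h
      have hJt : Jmᵀ = Jm := by rw [Jm, Matrix.fromBlocks_transpose]; simp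
      rw [hJt] at h
      exact h.symm
    calc P * Jm = Pv * (Puᵀ * Jm) := by rw [hPdef, Matrix.mul_assoc]
      _ = Pv * (Jm * Puᵀ) := by rw [hPuJt]
      _ = (Pv * Jm) * Puᵀ := by rw [← Matrix.mul_assoc]
      _ = (Jm * Pv) * Puᵀ := by rw [hPvJ]
      _ = Jm * P := by rw [hPdef, Matrix.mul_assoc]
  have hPinv : P⁻¹ = Pᵀ := Matrix.inv_eq_right_inv hPPt
  refine ⟨P, hmemP, ?_⟩
  rw [hPinv]
  calc v = v * (P * Pᵀ) := by rw [hPPt, Matrix.mul_one]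
    _ = (v * P) * Pᵀ := (Matrix.mul_assoc v P Pᵀ).symm
    _ = P * u * Pᵀ := by rw [hcomm]
end
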